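/- arXiv:1004.3524 — 2 statements merged into one kernel-verified Lean document; each statement's English description precedes it below -/
import Mathlib

section
/- Let G be a finite simple undirected graph, let g be a finite simple graph, and let k ≥ 1. Then the number of closed walks of length k in G whose underlying simple graph is isomorphic to g equals ω_g^(k) · F(g, G), where ω_g^(k) is the number of closed walks of length k in g that visit every vertex and every edge of g, and F(g, G) is the number of subgraphs of G isomorphic to g. Consequently, the k-th spectral moment of G satisfies m_k(A_G) = (1/n) Σ_{g ∈ I_k} ω_g^(k) F(g, G), where I_k is the set of isomorphism classes of underlying simple graphs of closed walks of length k. -/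
/-!
Sort the closed walks of length `k` in `G` by the subgraph `h ⊆ G` they trace out. Those tracing
out `h` are, read inside `h`, exactly the closed walks of length `k` that cover all of `h`, and
their number is invariant under isomorphism; so summing over the copies of `g` in `G` gives
`ω_g^(k) · F(g, G)`. As `trace (A_G ^ k)` counts all closed walks of length `k`, grouping them
by the isomorphism class of their underlying graph gives the moment formula.
-/

open SimpleGraph

/-- The number `ω_g^(k)` of closed walks of length `k` in a simple graph `g` that visit
every vertex and traverse every edge of `g` (i.e. whose underlying simple graph is all
of `g`). -/
noncomputable def spanningClosedWalkCount {U : Type*} (g : SimpleGraph U) (k : ℕ) : ℕ :=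
  Nat.card {p : (u : U) × g.Walk u u // p.2.length = k ∧ p.2.toSubgraph = ⊤}

/-- The embedding frequency `F(g, G)`: the number of subgraphs of `G` isomorphic to `g`. -/
noncomputable def embeddingFreq {U V : Type*} (g : SimpleGraph U) (G : SimpleGraph V) : ℕ :=
  Nat.card {h : G.Subgraph // Nonempty (h.coe ≃g g)}

theorem Nat.card_eq_sum_card_of_existsUnique {α ι : Type*} [Fintype ι] {Q : α → Prop}
    (hQ : {a | Q a}.Finite) (P : ι → α → Prop) (hP : ∀ a, Q a → ∃! i, P i a) :
    Nat.card {a // Q a} = ∑ i, Nat.card {a // Q a ∧ P i a} := by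
  have : Finite {a // Q a} := hQ.to_subtype
  choose f hf hf_unique using fun a : {a // Q a} => hP a a.2
  rw [← Nat.card_congr (Equiv.sigmaFiberEquiv f), Nat.card_sigma]
  refine Finset.sum_congr rfl fun i _ => Nat.card_congr ?_
  exact (Equiv.subtypeEquivRight fun a =>
    ⟨fun h => h ▸ hf a, fun h => (hf_unique a i h).symm⟩).trans
      (Equiv.subtypeSubtypeEquivSubtypeInter Q (P i))

namespace SimpleGraph

variable {V W : Type*} {G : SimpleGraph V} {H : SimpleGraph W}

theorem Subgraph.map_iso_eq_top_iff (e : G ≃g H) (S : G.Subgraph) :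
    S.map e.toHom = ⊤ ↔ S = ⊤ :=
  ⟨fun h => by simpa [← Subgraph.map_comp] using congrArg (Subgraph.map e.symm.toHom) h,
    fun h => h ▸ Subgraph.map_iso_top e⟩

theorem Walk.length_mapToSubgraph {u v : V} (w : G.Walk u v) :
    w.mapToSubgraph.length = w.length :=
  (Walk.length_map _ _).symm.trans (congrArg Walk.length w.map_mapToSubgraph_hom)

theorem Walk.toSubgraph_mapToSubgraph {u v : V} (w : G.Walk u v) :
    w.mapToSubgraph.toSubgraph = ⊤ :=
  Subgraph.coeSubgraph_injective _ <| (Walk.toSubgraph_map _ _).symm.trans <|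
    (congrArg Walk.toSubgraph w.map_mapToSubgraph_hom).trans (Subgraph.map_hom_top _).symm

def closedWalkMap (f : G →g H) (p : (v : V) × G.Walk v v) : (w : W) × H.Walk w w :=
  ⟨f p.1, p.2.map f⟩

theorem closedWalkMap_injective {f : G →g H} (hf : Function.Injective f) :
    Function.Injective (closedWalkMap f) := by
  rintro ⟨u, p⟩ ⟨v, q⟩ hpq
  simp only [closedWalkMap, Sigma.mk.inj_iff] at hpq
  obtain ⟨huv, hpq⟩ := hpq
  obtain rfl := hf huv
  rw [heq_eq_eq] at hpq
  rw [Walk.map_injective_of_injective hf u u hpq]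

theorem closedWalkMap_id (p : (v : V) × G.Walk v v) : closedWalkMap Hom.id p = p := by
  simp [closedWalkMap]

theorem closedWalkMap_comp {X : Type*} {K : SimpleGraph X} (f : G →g H) (f' : H →g K)
    (p : (v : V) × G.Walk v v) :
    closedWalkMap (f'.comp f) p = closedWalkMap f' (closedWalkMap f p) := by
  simp [closedWalkMap, Walk.map_map]

def Iso.closedWalkEquiv (e : G ≃g H) : ((v : V) × G.Walk v v) ≃ (w : W) × H.Walk w w where
  toFun := closedWalkMap e.toHom
  invFun := closedWalkMap e.symm.toHom
  left_inv p := by rw [← closedWalkMap_comp, Iso.symm_toHom_comp_toHom, closedWalkMap_id]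
  right_inv p := by rw [← closedWalkMap_comp, Iso.toHom_comp_symm_toHom, closedWalkMap_id]

theorem Iso.spanningClosedWalkCount_eq (e : G ≃g H) (k : ℕ) :
    spanningClosedWalkCount G k = spanningClosedWalkCount H k :=
  Nat.card_congr <| e.closedWalkEquiv.subtypeEquiv fun p => by
    simp [Iso.closedWalkEquiv, closedWalkMap, Walk.toSubgraph_map, Subgraph.map_iso_eq_top_iff]

theorem Subgraph.card_closedWalks_toSubgraph_eq (h : G.Subgraph) (k : ℕ) :
    Nat.card {p : (v : V) × G.Walk v v // p.2.length = k ∧ p.2.toSubgraph = h}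
      = spanningClosedWalkCount h.coe k := by
  refine (Nat.card_eq_of_bijective (Subtype.map (closedWalkMap h.hom) fun p hp => ?_)
    ⟨Subtype.map_injective _ (closedWalkMap_injective Subgraph.hom_injective), ?_⟩).symm
  · exact ⟨(Walk.length_map _ _).trans hp.1, by
      rw [closedWalkMap, Walk.toSubgraph_map, hp.2, Subgraph.map_hom_top]⟩
  · rintro ⟨⟨v, w⟩, hlen, rfl⟩
    exact ⟨⟨⟨_, w.mapToSubgraph⟩, w.length_mapToSubgraph.trans hlen,
      w.toSubgraph_mapToSubgraph⟩,
      Subtype.ext (Sigma.ext rfl (heq_of_eq w.map_mapToSubgraph_hom))⟩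

def closedWalksOfLengthEquivSigma (k : ℕ) :
    {p : (v : V) × G.Walk v v // p.2.length = k} ≃ (v : V) × {w : G.Walk v v // w.length = k}
    where
  toFun p := ⟨p.1.1, p.1.2, p.2⟩
  invFun q := ⟨⟨q.1, q.2.1⟩, q.2.2⟩
  left_inv _ := rfl
  right_inv _ := rfl

theorem trace_adjMatrix_pow_eq_card_closedWalks [Fintype V] [DecidableEq V]
    [DecidableRel G.Adj] {α : Type*} [Semiring α] (k : ℕ) :
    (G.adjMatrix α ^ k).trace = Nat.card {p : (v : V) × G.Walk v v // p.2.length = k} := by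
  rw [Nat.card_congr (closedWalksOfLengthEquivSigma k), Nat.card_sigma, Nat.cast_sum]
  refine Finset.sum_congr rfl fun v _ => ?_
  rw [Matrix.diag_apply, adjMatrix_pow_apply_eq_card_walk, ← Nat.card_eq_fintype_card,
    Set.coe_ofPred]

section Finite

variable [Finite V]

theorem finite_setOf_closedWalk_length (k : ℕ) :
    {p : (v : V) × G.Walk v v | p.2.length = k}.Finite := by
  classical
  have := Fintype.ofFinite V
  exact Set.finite_coe_iff.mp (Finite.of_equiv _ (closedWalksOfLengthEquivSigma k).symm)

theorem card_closedWalks_iso_eq (g : SimpleGraph W) (k : ℕ) :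
    Nat.card {p : (v : V) × G.Walk v v // p.2.length = k ∧ Nonempty (p.2.toSubgraph.coe ≃g g)}
      = spanningClosedWalkCount g k * embeddingFreq g G := by
  let Copies := {h : G.Subgraph // Nonempty (h.coe ≃g g)}
  have := Fintype.ofFinite Copies
  have hfiber (h : Copies) :
      Nat.card {p : (v : V) × G.Walk v v //
        (p.2.length = k ∧ Nonempty (p.2.toSubgraph.coe ≃g g)) ∧ p.2.toSubgraph = h}
        = spanningClosedWalkCount g k := by
    rw [← h.2.some.spanningClosedWalkCount_eq, ← h.1.card_closedWalks_toSubgraph_eq]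
    exact Nat.card_congr <| Equiv.subtypeEquivRight fun p =>
      ⟨fun hp => ⟨hp.1.1, hp.2⟩, fun hp => ⟨⟨hp.1, hp.2 ▸ h.2⟩, hp.2⟩⟩
  rw [Nat.card_eq_sum_card_of_existsUnique ((finite_setOf_closedWalk_length k).subset
    fun _ hp => hp.1) (fun (h : Copies) p => p.2.toSubgraph = h)
    fun p hp => ⟨⟨_, hp.2⟩, rfl, fun h hh => Subtype.ext hh.symm⟩]
  simp [hfiber, Copies, embeddingFreq, Nat.card_eq_fintype_card, mul_comm]

end Finite

end SimpleGraph

theorem moments_from_motifs_general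
    {V U ι : Type*} [Fintype V] [DecidableEq V] [Fintype ι]
    (G : SimpleGraph V) [DecidableRel G.Adj] (g : SimpleGraph U) (k : ℕ)
    (reps : ι → Σ m : ℕ, SimpleGraph (Fin m))
    (hdistinct : ∀ i j : ι, Nonempty ((reps i).2 ≃g (reps j).2) → i = j)
    (hcover : ∀ (v : V) (w : G.Walk v v), w.length = k →
      ∃ i : ι, Nonempty (w.toSubgraph.coe ≃g (reps i).2)) :
    Nat.card {p : (v : V) × G.Walk v v //
        p.2.length = k ∧ Nonempty (p.2.toSubgraph.coe ≃g g)}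
      = spanningClosedWalkCount g k * embeddingFreq g G
    ∧ (Fintype.card V : ℝ)⁻¹ * Matrix.trace (G.adjMatrix ℝ ^ k)
      = (Fintype.card V : ℝ)⁻¹
        * ∑ i : ι, (spanningClosedWalkCount (reps i).2 k * embeddingFreq (reps i).2 G : ℝ) := by
  refine ⟨G.card_closedWalks_iso_eq g k, ?_⟩
  have hpartition := Nat.card_eq_sum_card_of_existsUnique (G.finite_setOf_closedWalk_length k)
    (fun i p => Nonempty (p.2.toSubgraph.coe ≃g (reps i).2)) fun p hp => by
      obtain ⟨i, ⟨e⟩⟩ := hcover p.1 p.2 hp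
      exact ⟨i, ⟨e⟩, fun j ⟨e'⟩ => hdistinct j i ⟨e'.symm.trans e⟩⟩
  rw [trace_adjMatrix_pow_eq_card_closedWalks, hpartition]
  simp [card_closedWalks_iso_eq]

/-- For a finite simple graph `G` on `n` vertices, a finite simple graph
`g`, and `k ≥ 1`: the number of closed walks of length `k` in `G` whose underlying simple
graph is isomorphic to `g` equals `ω_g^(k) · F(g, G)`.  Consequently, if
`(reps i)_{i ∈ ι}` is a system of pairwise non-isomorphic representatives of the
isomorphism classes `I_k` of underlying simple graphs of closed walks of length `k`
in `G`, then `m_k(A_G) = (1/n) Σ_{g ∈ I_k} ω_g^(k) F(g, G)`. -/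
theorem moments_from_motifs
    {V U ι : Type*} [Fintype V] [DecidableEq V] [Fintype U] [Fintype ι]
    (G : SimpleGraph V) [DecidableRel G.Adj] (g : SimpleGraph U) (k : ℕ) (hk : 1 ≤ k)
    (reps : ι → Σ m : ℕ, SimpleGraph (Fin m))
    (hdistinct : ∀ i j : ι, Nonempty ((reps i).2 ≃g (reps j).2) → i = j)
    (hcover : ∀ (v : V) (w : G.Walk v v), w.length = k →
      ∃ i : ι, Nonempty (w.toSubgraph.coe ≃g (reps i).2)) :
    Nat.card {p : (v : V) × G.Walk v v //
        p.2.length = k ∧ Nonempty (p.2.toSubgraph.coe ≃g g)}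
      = spanningClosedWalkCount g k * embeddingFreq g G
    ∧ (Fintype.card V : ℝ)⁻¹ * Matrix.trace (G.adjMatrix ℝ ^ k)
      = (Fintype.card V : ℝ)⁻¹
        * ∑ i : ι, (spanningClosedWalkCount (reps i).2 k * embeddingFreq (reps i).2 G : ℝ) :=
  moments_from_motifs_general G g k reps hdistinct hcover
end

section
/- Let G be a finite simple undirected graph. Let Υ_G be the number of subgraphs of G isomorphic to the paw graph (a triangle with one pendant edge), let Δ_G be the total number of triangles in G, and for each vertex i let Δ_G^(i) be the number of triangles of G containing i and d_i its degree. Then Υ_G = Σ_{i ∈ V(G)} (d_i − 2) Δ_G^(i) = C_{Δd} − 6Δ_G, where C_{Δd} = Σ_{i ∈ V(G)} d_i Δ_G^(i) is the clustering–degree correlation coefficient. -/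
open SimpleGraph

/-- The paw graph: a triangle on `{0, 1, 2}` together with one additional pendant edge
`{2, 3}` attached to one of its vertices. -/
def pawGraph : SimpleGraph (Fin 4) :=
  SimpleGraph.fromRel (fun i j =>
    (i = 0 ∧ j = 1) ∨ (i = 0 ∧ j = 2) ∨ (i = 1 ∧ j = 2) ∨ (i = 2 ∧ j = 3))

/-- `Δ_G^(i)`: the number of triangles of `G` containing the vertex `i`. -/
def trianglesAt {V : Type*} [Fintype V] [DecidableEq V]
    (G : SimpleGraph V) [DecidableRel G.Adj] (i : V) : ℕ :=
  ((G.cliqueFinset 3).filter (fun s => i ∈ s)).card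

/-!
A paw in `G` is a triangle `s` with a pendant edge `cd`, where `c ∈ s` and `d ∉ s`, and every such
frame `(s, c, d)` spans a paw. The paw determines its frame: `d` is its only vertex with a single
neighbour, `c` is that neighbour and `s` is the rest. For a triangle `s` and `c ∈ s` there are
`d_c - 2` choices of `d`, so `Υ_G = ∑_s ∑_{c ∈ s} (d_c - 2)`; exchanging the sums gives
`∑_i (d_i - 2) Δ_G^(i)`, and `∑_i Δ_G^(i) = 3 Δ_G` gives the second form.
-/

open Finset

lemma Finset.sum_sum_eq_sum_card_filter_mem_nsmul {α M : Type*} [Fintype α] [DecidableEq α]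
    [AddCommMonoid M] (B : Finset (Finset α)) (f : α → M) :
    ∑ s ∈ B, ∑ a ∈ s, f a = ∑ a, #{s ∈ B | a ∈ s} • f a := by
  rw [sum_comm' (t' := univ) (s' := fun a => {s ∈ B | a ∈ s}) (fun s a => by simp)]
  simp_rw [sum_const]

namespace SimpleGraph

variable {V : Type*} {G : SimpleGraph V}

lemma IsNClique.exists_eq_triple_of_mem [DecidableEq V] {s : Finset V} {c : V}
    (hs : G.IsNClique 3 s) (hc : c ∈ s) :
    ∃ a b, G.Adj a b ∧ G.Adj a c ∧ G.Adj b c ∧ s = {a, b, c} := by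
  obtain ⟨a, b, -, hab⟩ := card_eq_two.1 (hs.erase_of_mem hc).card_eq
  have hsabc : s = {a, b, c} := by
    rw [← insert_erase hc, hab]
    ext x
    simp only [mem_insert, mem_singleton]
    tauto
  rw [hsabc, is3Clique_triple_iff] at hs
  exact ⟨a, b, hs.1, hs.2.1, hs.2.2, hsabc⟩

lemma IsNClique.exists_adj_adj_of_mem [DecidableEq V] {s : Finset V} {x : V}
    (hs : G.IsNClique 3 s) (hx : x ∈ s) :
    ∃ y z, y ≠ z ∧ y ∈ s ∧ z ∈ s ∧ G.Adj x y ∧ G.Adj x z := by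
  obtain ⟨y, z, hyz, hyx, hzx, rfl⟩ := hs.exists_eq_triple_of_mem hx
  exact ⟨y, z, hyz.ne, by simp, by simp, hyx.symm, hzx.symm⟩

lemma IsNClique.card_neighborFinset_sdiff_add [Fintype V] [DecidableEq V] [DecidableRel G.Adj]
    {n : ℕ} {s : Finset V} {c : V} (hs : G.IsNClique n s) (hc : c ∈ s) :
    #(G.neighborFinset c \ s) + (n - 1) = G.degree c := by
  have hinter : G.neighborFinset c ∩ s = s.erase c := by
    ext x
    simp only [mem_inter, mem_neighborFinset, mem_erase]
    exact ⟨fun ⟨hcx, hx⟩ => ⟨hcx.ne', hx⟩, fun ⟨hxc, hx⟩ => ⟨hs.isClique hc hx hxc.symm, hx⟩⟩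
  have hsplit := card_sdiff_add_card_inter (G.neighborFinset c) s
  rw [hinter, card_erase_of_mem hc, hs.card_eq] at hsplit
  rw [← card_neighborFinset_eq_degree, hsplit]

def pawSubgraph (G : SimpleGraph V) (s : Finset V) (c d : V) : G.Subgraph :=
  (⊤ : G.Subgraph).induce s ⊔ (⊤ : G.Subgraph).induce {c, d}

lemma pawSubgraph_verts {s : Finset V} {c d : V} :
    (pawSubgraph G s c d).verts = ↑s ∪ {c, d} := rfl

lemma pawSubgraph_adj {s : Finset V} {c d x y : V} :
    (pawSubgraph G s c d).Adj x y ↔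
      G.Adj x y ∧ (x ∈ s ∧ y ∈ s ∨ x ∈ ({c, d} : Set V) ∧ y ∈ ({c, d} : Set V)) := by
  simp only [pawSubgraph, Subgraph.sup_adj, Subgraph.induce_adj, Subgraph.top_adj, mem_coe]
  tauto

lemma pawSubgraph_adj_pendant_iff {s : Finset V} {c d y : V} (hcd : G.Adj c d) (hd : d ∉ s) :
    (pawSubgraph G s c d).Adj d y ↔ y = c := by
  rw [pawSubgraph_adj]
  constructor
  · rintro ⟨hdy, ⟨hds, -⟩ | ⟨-, rfl | rfl⟩⟩
    · exact absurd hds hd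
    · rfl
    · exact absurd rfl hdy.ne
  · rintro rfl
    exact ⟨hcd.symm, Or.inr ⟨Or.inr rfl, Or.inl rfl⟩⟩

lemma eq_of_pawSubgraph_eq [DecidableEq V] {s s' : Finset V} {c c' d d' : V}
    (hc : c ∈ s) (hcd : G.Adj c d) (hd : d ∉ s)
    (hs' : G.IsNClique 3 s') (hc' : c' ∈ s') (hcd' : G.Adj c' d') (hd' : d' ∉ s')
    (h : pawSubgraph G s c d = pawSubgraph G s' c' d') : s = s' ∧ c = c' ∧ d = d' := by
  have hverts := congrArg Subgraph.verts h
  simp only [pawSubgraph_verts] at hverts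
  obtain rfl : d = d' := by
    by_contra hne
    have hds' : d ∈ s' := by
      have : d ∈ (s' : Set V) ∪ {c', d'} := hverts ▸ by simp
      simp only [Set.mem_union, mem_coe, Set.mem_insert_iff, Set.mem_singleton_iff] at this
      rcases this with h | rfl | rfl
      · exact h
      · exact hc'
      · exact absurd rfl hne
    -- `d` is a leaf of the first paw but has two neighbours in the triangle `s'` of the second
    obtain ⟨y, z, hyz, hy, hz, hdy, hdz⟩ := hs'.exists_adj_adj_of_mem hds'
    have hy' : (pawSubgraph G s' c' d').Adj d y := pawSubgraph_adj.2 ⟨hdy, Or.inl ⟨hds', hy⟩⟩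
    have hz' : (pawSubgraph G s' c' d').Adj d z := pawSubgraph_adj.2 ⟨hdz, Or.inl ⟨hds', hz⟩⟩
    rw [← h, pawSubgraph_adj_pendant_iff hcd hd] at hy' hz'
    exact hyz (hy'.trans hz'.symm)
  obtain rfl : c = c' := by
    rw [← pawSubgraph_adj_pendant_iff hcd' hd', ← h, pawSubgraph_adj_pendant_iff hcd hd]
  refine ⟨?_, rfl, rfl⟩
  ext x
  have hx := Set.ext_iff.1 hverts x
  simp only [Set.mem_union, mem_coe, Set.mem_insert_iff, Set.mem_singleton_iff] at hx
  by_cases hxd : x = d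
  · simp only [hxd, hd, hd']
  · by_cases hxc : x = c
    · simp only [hxc, hc, hc']
    · simpa [hxd, hxc] using hx

lemma Copy.toSubgraph_pawGraph [DecidableEq V] (f : Copy pawGraph G) :
    f.toSubgraph = pawSubgraph G {f 0, f 1, f 2} (f 2) (f 3) := by
  ext x y
  · simp [pawSubgraph, Fin.exists_fin_succ]
    tauto
  · simp only [pawSubgraph, Subgraph.map_adj, Relation.Map, Subgraph.top_adj, Subgraph.sup_adj,
      Subgraph.induce_adj, coe_insert, coe_singleton, Set.mem_insert_iff, Set.mem_singleton_iff]
    constructor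
    · rintro ⟨i, j, hij, hx, hy⟩
      obtain rfl : f i = x := hx
      obtain rfl : f j = y := hy
      have hG : G.Adj (f i) (f j) := f.toHom.map_adj hij
      fin_cases i <;> fin_cases j <;> simp_all [pawGraph]
    · rintro (⟨hx, hy, hxy⟩ | ⟨hx, hy, hxy⟩) <;> rcases hx with rfl | rfl | rfl <;>
        rcases hy with rfl | rfl | rfl <;>
        first | exact absurd rfl hxy.ne | exact ⟨_, _, by simp [pawGraph], rfl, rfl⟩

def pawCopy {a b c d : V} (hab : G.Adj a b) (hac : G.Adj a c) (hbc : G.Adj b c)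
    (hcd : G.Adj c d) (hda : d ≠ a) (hdb : d ≠ b) : Copy pawGraph G where
  toHom := ⟨![a, b, c, d], fun {i j} hij => by
    fin_cases i <;> fin_cases j <;> simp_all [pawGraph, hab.symm, hac.symm, hbc.symm, hcd.symm]⟩
  injective' i j hij := by
    fin_cases i <;> fin_cases j <;>
      simp_all [hab.ne, hac.ne, hbc.ne, hcd.ne, hab.ne', hac.ne', hbc.ne', hcd.ne', hda.symm,
        hdb.symm]

variable [Fintype V] [DecidableEq V] [DecidableRel G.Adj]

variable (G) in
def pawFrames : Finset (Σ _ : Finset V, Σ _ : V, V) :=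
  (G.cliqueFinset 3).sigma fun s => s.sigma fun c => G.neighborFinset c \ s

lemma mem_pawFrames {s : Finset V} {c d : V} :
    ⟨s, c, d⟩ ∈ pawFrames G ↔ G.IsNClique 3 s ∧ c ∈ s ∧ G.Adj c d ∧ d ∉ s := by
  simp [pawFrames]

lemma card_pawFrames :
    (#(pawFrames G) : ℤ) = ∑ s ∈ G.cliqueFinset 3, ∑ c ∈ s, ((G.degree c : ℤ) - 2) := by
  rw [pawFrames, card_sigma, Nat.cast_sum]
  refine sum_congr rfl fun s hs => ?_
  rw [card_sigma, Nat.cast_sum]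
  refine sum_congr rfl fun c hc => ?_
  have := (mem_cliqueFinset_iff.1 hs).card_neighborFinset_sdiff_add hc
  omega

lemma injOn_pawSubgraph_pawFrames :
    Set.InjOn (fun t : Σ _ : Finset V, Σ _ : V, V => pawSubgraph G t.1 t.2.1 t.2.2)
      (pawFrames G) := by
  rintro ⟨s, c, d⟩ ht ⟨s', c', d'⟩ ht' h
  obtain ⟨-, hc, hcd, hd⟩ := mem_pawFrames.1 ht
  obtain ⟨hs', hc', hcd', hd'⟩ := mem_pawFrames.1 ht'
  obtain ⟨rfl, rfl, rfl⟩ := eq_of_pawSubgraph_eq hc hcd hd hs' hc' hcd' hd' h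
  rfl

lemma setOf_nonempty_iso_pawGraph_eq_image :
    {H : G.Subgraph | Nonempty (H.coe ≃g pawGraph)} =
      (fun t : Σ _ : Finset V, Σ _ : V, V => pawSubgraph G t.1 t.2.1 t.2.2) '' pawFrames G := by
  ext H
  constructor
  · rintro ⟨e⟩
    obtain ⟨f, rfl⟩ : H ∈ Set.range (Copy.toSubgraph (A := pawGraph)) := by
      rw [Copy.range_toSubgraph]
      exact ⟨e.symm⟩
    have adj (i j : Fin 4) (h : pawGraph.Adj i j) : G.Adj (f i) (f j) := f.toHom.map_adj h
    have ne (i j : Fin 4) (h : i ≠ j) : f i ≠ f j := f.injective.ne h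
    refine ⟨⟨{f 0, f 1, f 2}, f 2, f 3⟩, mem_pawFrames.2 ⟨?_, by simp, ?_, ?_⟩,
      f.toSubgraph_pawGraph.symm⟩
    · exact is3Clique_triple_iff.2 ⟨adj 0 1 (by simp [pawGraph]), adj 0 2 (by simp [pawGraph]),
        adj 1 2 (by simp [pawGraph])⟩
    · exact adj 2 3 (by simp [pawGraph])
    · simp [ne 3 0 (by decide), ne 3 1 (by decide), ne 3 2 (by decide)]
  · rintro ⟨⟨s, c, d⟩, ht, rfl⟩
    obtain ⟨hs, hc, hcd, hd⟩ := mem_pawFrames.1 ht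
    obtain ⟨a, b, hab, hac, hbc, rfl⟩ := hs.exists_eq_triple_of_mem hc
    have hda : d ≠ a := fun h => hd (by simp [h])
    have hdb : d ≠ b := fun h => hd (by simp [h])
    have hf : (pawCopy hab hac hbc hcd hda hdb).toSubgraph = pawSubgraph G {a, b, c} c d :=
      (pawCopy hab hac hbc hcd hda hdb).toSubgraph_pawGraph
    show Nonempty ((pawSubgraph G {a, b, c} c d).coe ≃g pawGraph)
    rw [← hf]
    exact ⟨(Copy.isoToSubgraph _).symm⟩

lemma embeddingFreq_pawGraph_eq_card_pawFrames : embeddingFreq pawGraph G = #(pawFrames G) := by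
  rw [embeddingFreq, ← Set.coe_ofPred, setOf_nonempty_iso_pawGraph_eq_image, Nat.card_coe_set_eq,
    injOn_pawSubgraph_pawFrames.ncard_image, Set.ncard_coe_finset]

lemma sum_cliqueFinset_sum_eq_sum_mul_trianglesAt (f : V → ℤ) :
    ∑ s ∈ G.cliqueFinset 3, ∑ c ∈ s, f c = ∑ c, f c * trianglesAt G c := by
  simp [sum_sum_eq_sum_card_filter_mem_nsmul, trianglesAt, mul_comm]

lemma sum_trianglesAt : ∑ c, trianglesAt G c = 3 * #(G.cliqueFinset 3) := by
  have hdouble := sum_sum_eq_sum_card_filter_mem_nsmul (G.cliqueFinset 3) fun _ => 1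
  simp only [smul_eq_mul, mul_one, sum_const] at hdouble
  calc ∑ c, trianglesAt G c = ∑ s ∈ G.cliqueFinset 3, #s := hdouble.symm
    _ = ∑ s ∈ G.cliqueFinset 3, 3 := sum_congr rfl fun s hs => (mem_cliqueFinset_iff.1 hs).card_eq
    _ = 3 * #(G.cliqueFinset 3) := by rw [sum_const, smul_eq_mul, mul_comm]

end SimpleGraph

/-- For a finite simple graph `G`, the number `Υ_G` of paw subgraphs
satisfies `Υ_G = Σ_i (d_i − 2) Δ_G^(i) = C_{Δd} − 6 Δ_G`, where `d_i` is the degree of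
vertex `i`, `Δ_G^(i)` the number of triangles containing `i`, `Δ_G` the total number of
triangles, and `C_{Δd} = Σ_i d_i Δ_G^(i)` the clustering–degree correlation
coefficient. -/
theorem paw_count_from_triangles
    {V : Type*} [Fintype V] [DecidableEq V] (G : SimpleGraph V) [DecidableRel G.Adj] :
    (embeddingFreq pawGraph G : ℤ)
      = ∑ i : V, ((G.degree i : ℤ) - 2) * (trianglesAt G i : ℤ)
    ∧ (embeddingFreq pawGraph G : ℤ)
      = (∑ i : V, (G.degree i : ℤ) * (trianglesAt G i : ℤ))
        - 6 * ((G.cliqueFinset 3).card : ℤ) := by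
  have hpaw : (embeddingFreq pawGraph G : ℤ) = ∑ i, ((G.degree i : ℤ) - 2) * trianglesAt G i := by
    rw [embeddingFreq_pawGraph_eq_card_pawFrames, card_pawFrames,
      sum_cliqueFinset_sum_eq_sum_mul_trianglesAt]
  have htri : ∑ i, (trianglesAt G i : ℤ) = 3 * #(G.cliqueFinset 3) := by
    exact_mod_cast sum_trianglesAt
  refine ⟨hpaw, ?_⟩
  rw [hpaw]
  simp only [sub_mul, sum_sub_distrib, ← mul_sum, htri]
  ring
end
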